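/- arXiv:2306.13201 — 3 statements merged into one kernel-verified Lean document; each statement's English description precedes it below -/
import Mathlib

section
/- For every n > 3, the edge set of the complete graph K_n can be partitioned into ⌈3n/4⌉ 2-star-forests. -/
/-- The edge set of the complete graph on `Fin n`: all non-diagonal unordered pairs. -/
def Kedges (n : ℕ) : Finset (Sym2 (Fin n)) :=
  Finset.univ.filter fun e => ¬ e.IsDiag

/-- `c` is a valid center assignment witnessing that the edge set `E` is a star-forest:
every edge contains its center, and any two distinct edges sharing a vertex are both
centered at that shared vertex (so every connected component is a star). -/
def IsStarForestOn {n : ℕ} (E : Finset (Sym2 (Fin n))) (c : Sym2 (Fin n) → Fin n) : Prop :=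
  (∀ e ∈ E, c e ∈ e) ∧
    ∀ e ∈ E, ∀ f ∈ E, e ≠ f → ∀ v : Fin n, v ∈ e → v ∈ f → c e = v

/-- `E` is (the edge set of) a star-forest. -/
def IsStarForest {n : ℕ} (E : Finset (Sym2 (Fin n))) : Prop :=
  ∃ c, IsStarForestOn E c

/-- `E` is a star-forest with at most `k` edge-containing star components. -/
def IsKStarForest {n : ℕ} (E : Finset (Sym2 (Fin n))) (k : ℕ) : Prop :=
  ∃ c, IsStarForestOn E c ∧ (E.image c).card ≤ k

/-- `E` is a 2-star-forest with exactly the two designated centers `a` and `b`,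
each center having a nonempty star. -/
def IsTwoStar {n : ℕ} (E : Finset (Sym2 (Fin n))) (a b : Fin n) : Prop :=
  ∃ c, IsStarForestOn E c ∧ (∀ e ∈ E, c e = a ∨ c e = b) ∧
    (∃ e ∈ E, c e = a) ∧ (∃ e ∈ E, c e = b)

/-- Combinatorial crossing of two chords of the convex polygon with vertices
`0, 1, …, n-1` in convex (cyclic) position. -/
def Cross {n : ℕ} (e f : Sym2 (Fin n)) : Prop :=
  ∃ a b c d : Fin n, e = s(a, b) ∧ f = s(c, d) ∧
    ((a < c ∧ c < b ∧ b < d) ∨ (c < a ∧ a < d ∧ d < b))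

/-- A plane (crossing-free) star-forest on the convex point set. -/
def PlaneStarForest {n : ℕ} (E : Finset (Sym2 (Fin n))) : Prop :=
  IsStarForest E ∧ ∀ e ∈ E, ∀ f ∈ E, ¬ Cross e f

/-!
Split the vertices into the blocks `{4q, 4q+1, 4q+2, 4q+3}`, `q < n / 4`, and the `n % 4` remaining
vertices. Each remaining vertex `w` gets a colour of its own, the star joining `w` to all smaller
vertices. Block `q` gets the three colours `3q, 3q+1, 3q+2`, with centre pairs `{4q, 4q+2}`,
`{4q+1, 4q+3}` and `{4q, 4q+1}`. Every other edge gets a colour of the block of its centre, which is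
its lower endpoint, except that an edge between equal residues mod 4, and the edge `{4q, 4q+3}`,
is centred at its upper endpoint. This uses `3 (n / 4) + n % 4 = ⌈3n/4⌉` colours.

A set of edges is a star forest with at most `k` stars as soon as its centres lie in a set `S` of
size at most `k`, its leaves lie outside `S`, and no vertex is the leaf of two of its edges. For a
colour class above this is a finite case check on residues mod 4.
-/

theorem isKStarForest_of_leaf_injective {n k : ℕ} {E : Finset (Sym2 (Fin n))} {S : Finset (Fin n)}
    (c : Sym2 (Fin n) → Fin n) (hk : S.card ≤ k) (hc : ∀ e ∈ E, c e ∈ e)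
    (hcS : ∀ e ∈ E, c e ∈ S) (hleaf : ∀ e ∈ E, ∀ v ∈ e, v ≠ c e → v ∉ S)
    (hinj : ∀ e ∈ E, ∀ f ∈ E, ∀ v ∈ e, v ∈ f → v ≠ c e → v ≠ c f → e = f) :
    IsKStarForest E k := by
  refine ⟨c, ⟨hc, fun e he f hf hef v hve hvf => ?_⟩, ?_⟩
  · by_contra hv
    have hvS : v ∉ S := hleaf e he v hve (Ne.symm hv)
    by_cases hvf' : v = c f
    · exact hvS (hvf' ▸ hcS f hf)
    · exact hef (hinj e he f hf v hve hvf (Ne.symm hv) hvf')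
  · exact (Finset.card_le_card (Finset.image_subset_iff.mpr hcS)).trans hk

theorem exists_lt_eq_mk_of_mem_Kedges {n : ℕ} {e : Sym2 (Fin n)} (he : e ∈ Kedges n) :
    ∃ x y : Fin n, x < y ∧ e = s(x, y) := by
  have hd : ¬ e.IsDiag := (Finset.mem_filter.mp he).2
  induction e using Sym2.ind with
  | _ x y =>
    rcases lt_trichotomy x y with h | rfl | h
    · exact ⟨x, y, h, rfl⟩
    · exact absurd rfl hd
    · exact ⟨y, x, h, Sym2.eq_swap⟩

section PairColoring

/-- Whether the edge `{a, b}`, `a < b`, is centred at `b` rather than at `a`. -/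
def IsUpperCenter (n a b : ℕ) : Prop :=
  4 * (n / 4) ≤ b ∨ (a % 4 = 0 ∧ b = a + 3) ∨ a % 4 = b % 4

instance (n a b : ℕ) : Decidable (IsUpperCenter n a b) := by
  unfold IsUpperCenter; infer_instance

def pairCenter (n a b : ℕ) : ℕ := if IsUpperCenter n a b then b else a

def pairLeaf (n a b : ℕ) : ℕ := if IsUpperCenter n a b then a else b

def pairColor (n a b : ℕ) : ℕ :=
  if 4 * (n / 4) ≤ b then 3 * (n / 4) + (b - 4 * (n / 4))
  else if a / 4 = b / 4 then
    3 * (a / 4) + (if b = a + 1 then a % 2 else if b = a + 2 then 2 else 1)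
  else if a % 4 = b % 4 then 3 * (b / 4) + b % 2
  else 3 * (a / 4) + (if 2 ≤ a % 4 then a % 2 else if b % 4 = a % 4 + 2 then a % 4 else 2)

def fstCenter (n i : ℕ) : ℕ :=
  if i < 3 * (n / 4) then 4 * (i / 3) + (if i % 3 = 1 then 1 else 0)
  else 4 * (n / 4) + (i - 3 * (n / 4))

def sndCenter (n i : ℕ) : ℕ :=
  if i < 3 * (n / 4) then 4 * (i / 3) + (if i % 3 = 0 then 2 else if i % 3 = 1 then 3 else 1)
  else 4 * (n / 4) + (i - 3 * (n / 4))

variable {n a b a' b' : ℕ}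

theorem pairColor_lt (hab : a < b) (hb : b < n) : pairColor n a b < 3 * (n / 4) + n % 4 := by
  unfold pairColor; split_ifs <;> omega

theorem pairCenter_eq_fstCenter_or_sndCenter (hab : a < b) :
    pairCenter n a b = fstCenter n (pairColor n a b) ∨
      pairCenter n a b = sndCenter n (pairColor n a b) := by
  generalize hi : pairColor n a b = i
  unfold pairColor at hi
  unfold pairCenter fstCenter sndCenter
  split_ifs at hi <;> split_ifs <;> unfold IsUpperCenter at * <;> omega

theorem pairLeaf_ne_fstCenter_and_sndCenter (hab : a < b) :
    pairLeaf n a b ≠ fstCenter n (pairColor n a b) ∧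
      pairLeaf n a b ≠ sndCenter n (pairColor n a b) := by
  generalize hi : pairColor n a b = i
  unfold pairColor at hi
  unfold pairLeaf fstCenter sndCenter
  split_ifs at hi <;> split_ifs <;> unfold IsUpperCenter at * <;> omega

set_option maxHeartbeats 2000000 in
theorem eq_of_pairColor_eq_of_pairLeaf_eq (hab : a < b) (hab' : a' < b')
    (hcol : pairColor n a b = pairColor n a' b')
    (hleaf : pairLeaf n a b = pairLeaf n a' b') : a = a' ∧ b = b' := by
  unfold pairLeaf at hleaf
  unfold pairColor at hcol
  split_ifs at hleaf <;> unfold IsUpperCenter at * <;> split_ifs at hcol <;> omega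

end PairColoring

section EdgeColoring

def edgeColor (n : ℕ) : Sym2 (Fin n) → ℕ :=
  Sym2.lift ⟨fun x y => pairColor n (min x y).val (max x y).val, fun x y => by
    dsimp only; rw [min_comm x y, max_comm x y]⟩

def edgeCenter (n : ℕ) : Sym2 (Fin n) → Fin n :=
  Sym2.lift ⟨fun x y => if IsUpperCenter n (min x y).val (max x y).val then max x y else min x y,
    fun x y => by dsimp only; rw [min_comm x y, max_comm x y]⟩

def colorClass (n i : ℕ) : Finset (Sym2 (Fin n)) :=
  (Kedges n).filter fun e => edgeColor n e = i

def colorCenters (n i : ℕ) : Finset (Fin n) :=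
  Finset.univ.filter fun v => v.val = fstCenter n i ∨ v.val = sndCenter n i

variable {n : ℕ}

theorem edgeColor_mk {x y : Fin n} (h : x ≤ y) : edgeColor n s(x, y) = pairColor n x y := by
  simp only [edgeColor, Sym2.lift_mk, min_eq_left h, max_eq_right h]

theorem edgeCenter_mk {x y : Fin n} (h : x ≤ y) :
    edgeCenter n s(x, y) = if IsUpperCenter n x y then y else x := by
  simp only [edgeCenter, Sym2.lift_mk, min_eq_left h, max_eq_right h]

theorem val_edgeCenter_mk {x y : Fin n} (h : x ≤ y) :
    (edgeCenter n s(x, y)).val = pairCenter n x y := by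
  rw [edgeCenter_mk h, pairCenter]; split_ifs <;> rfl

theorem val_eq_pairLeaf {x y v : Fin n} (h : x ≤ y) (hv : v ∈ s(x, y))
    (hvc : v ≠ edgeCenter n s(x, y)) : v.val = pairLeaf n x y := by
  rw [edgeCenter_mk h] at hvc
  rw [pairLeaf]
  rcases Sym2.mem_iff.mp hv with rfl | rfl <;> split_ifs at hvc ⊢ <;> simp_all

theorem card_colorCenters_le (n i : ℕ) : (colorCenters n i).card ≤ 2 := by
  calc (colorCenters n i).card ≤ ({fstCenter n i, sndCenter n i} : Finset ℕ).card :=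
        Finset.card_le_card_of_injOn Fin.val (fun v hv => by simpa [colorCenters] using hv)
          Fin.val_injective.injOn
    _ ≤ 2 := Finset.card_le_two

theorem exists_lt_eq_mk_of_mem_colorClass {i : ℕ} {e : Sym2 (Fin n)} (he : e ∈ colorClass n i) :
    ∃ x y : Fin n, x < y ∧ e = s(x, y) ∧ pairColor n x y = i := by
  obtain ⟨he, hcol⟩ := Finset.mem_filter.mp he
  obtain ⟨x, y, hxy, rfl⟩ := exists_lt_eq_mk_of_mem_Kedges he
  exact ⟨x, y, hxy, rfl, (edgeColor_mk hxy.le).symm.trans hcol⟩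

theorem isKStarForest_colorClass (n i : ℕ) : IsKStarForest (colorClass n i) 2 := by
  refine isKStarForest_of_leaf_injective (edgeCenter n) (card_colorCenters_le n i) ?_ ?_ ?_ ?_
  · intro e he
    obtain ⟨x, y, hxy, rfl, -⟩ := exists_lt_eq_mk_of_mem_colorClass he
    rw [edgeCenter_mk hxy.le]
    split_ifs <;> simp
  · intro e he
    obtain ⟨x, y, hxy, rfl, rfl⟩ := exists_lt_eq_mk_of_mem_colorClass he
    simpa [colorCenters, val_edgeCenter_mk hxy.le] using pairCenter_eq_fstCenter_or_sndCenter hxy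
  · intro e he v hv hvc
    obtain ⟨x, y, hxy, rfl, rfl⟩ := exists_lt_eq_mk_of_mem_colorClass he
    simpa [colorCenters, val_eq_pairLeaf hxy.le hv hvc] using
      pairLeaf_ne_fstCenter_and_sndCenter hxy
  · intro e he f hf v hve hvf hvce hvcf
    obtain ⟨x, y, hxy, rfl, rfl⟩ := exists_lt_eq_mk_of_mem_colorClass he
    obtain ⟨x', y', hxy', rfl, hcol⟩ := exists_lt_eq_mk_of_mem_colorClass hf
    obtain ⟨hx, hy⟩ := eq_of_pairColor_eq_of_pairLeaf_eq hxy hxy' hcol.symm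
      ((val_eq_pairLeaf hxy.le hve hvce).symm.trans (val_eq_pairLeaf hxy'.le hvf hvcf))
    rw [Fin.ext hx, Fin.ext hy]

end EdgeColoring

theorem stmt2_general (n : ℕ) :
    ∃ F : Fin ((3 * n + 3) / 4) → Finset (Sym2 (Fin n)),
      (∀ i, IsKStarForest (F i) 2) ∧ (∀ i, F i ⊆ Kedges n) ∧
      (∀ i j, i ≠ j → Disjoint (F i) (F j)) ∧
      (∀ e ∈ Kedges n, ∃ i, e ∈ F i) := by
  refine ⟨fun i => colorClass n i, fun i => isKStarForest_colorClass n i,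
    fun i => Finset.filter_subset _ _, ?_, ?_⟩
  · intro i j hij
    exact Finset.disjoint_filter.mpr fun e _ hi hj => hij (Fin.ext (hi.symm.trans hj))
  · intro e he
    obtain ⟨x, y, hxy, rfl⟩ := exists_lt_eq_mk_of_mem_Kedges he
    have hlt := pairColor_lt hxy y.isLt
    refine ⟨⟨edgeColor n s(x, y), by rw [edgeColor_mk hxy.le]; omega⟩, ?_⟩
    exact Finset.mem_filter.mpr ⟨he, rfl⟩

/-- for every n > 3, the edge set of K_n can be partitioned into
⌈3n/4⌉ 2-star-forests. -/
theorem stmt2 (n : ℕ) (hn : 3 < n) :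
    ∃ F : Fin ((3 * n + 3) / 4) → Finset (Sym2 (Fin n)),
      (∀ i, IsKStarForest (F i) 2) ∧ (∀ i, F i ⊆ Kedges n) ∧
      (∀ i j, i ≠ j → Disjoint (F i) (F j)) ∧
      (∀ e ∈ Kedges n, ∃ i, e ∈ F i) :=
  stmt2_general n
end

section
/- Let n be divisible by 4, and partition the vertex set of K_n into four sets V_1, V_2, V_3, V_4 each of size n/4. Then K_n can be covered by 3n/4 subgraphs, each of which is a vertex-disjoint union of two stars: for each u in V_2 with a bijection f: V_2 → V_1, a forest with star centered at u covering edges to V_2 ∪ V_3 and star centered at f(u) covering edges to V_1 ∪ V_4; and two analogous families. -/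
/-!
Enumerate each part as `V i = {σ i k : k < m}`. A round is a splitting of the four parts into two
pairs `{P, P'}`, `{Q, Q'}` with a designated centre part in each pair; for every index `k` the round
contributes the 2-star-forest consisting of the star at `σ P k` spanning `P ∪ P'` and the star at
`σ Q k` spanning `Q ∪ Q'`, which are vertex-disjoint. The three splittings of four parts into two
pairs cover every pair of distinct parts once, and the centre parts can be chosen so that every part
is a centre part in some round. Hence every edge `uv` has an endpoint, say `u = σ P k`, whose star
in round `(t, k)` contains `v`, and the `3m` forests cover `K_{4m}`.
-/

open Finset

variable {n : ℕ}

def starEdges (a : Fin n) (L : Finset (Fin n)) : Finset (Sym2 (Fin n)) :=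
  L.image (s(a, ·))

def twoStars (a b : Fin n) (X Y : Finset (Fin n)) : Finset (Sym2 (Fin n)) :=
  starEdges a (X.erase a) ∪ starEdges b (Y.erase b)

section StarEdges

variable {a v : Fin n} {L : Finset (Fin n)} {e f : Sym2 (Fin n)}

lemma center_mem_of_mem_starEdges (he : e ∈ starEdges a L) : a ∈ e := by
  obtain ⟨w, -, rfl⟩ := mem_image.1 he
  exact Sym2.mem_mk_left a w

lemma mem_insert_of_mem_starEdges (he : e ∈ starEdges a L) (hv : v ∈ e) : v ∈ insert a L := by
  obtain ⟨w, hw, rfl⟩ := mem_image.1 he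
  rcases Sym2.mem_iff.1 hv with rfl | rfl
  · exact mem_insert_self _ _
  · exact mem_insert_of_mem hw

lemma eq_center_of_mem_starEdges (ha : a ∉ L) (he : e ∈ starEdges a L) (hf : f ∈ starEdges a L)
    (hef : e ≠ f) (hve : v ∈ e) (hvf : v ∈ f) : v = a := by
  obtain ⟨w, hw, rfl⟩ := mem_image.1 he
  obtain ⟨x, -, rfl⟩ := mem_image.1 hf
  rcases Sym2.mem_iff.1 hve with rfl | rfl
  · rfl
  · rcases Sym2.mem_iff.1 hvf with rfl | rfl
    · exact absurd hw ha
    · exact absurd rfl hef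

lemma starEdges_subset_kedges (ha : a ∉ L) : starEdges a L ⊆ Kedges n := by
  intro e he
  obtain ⟨w, hw, rfl⟩ := mem_image.1 he
  simpa [Kedges] using fun h : a = w => ha (h ▸ hw)

end StarEdges

lemma isKStarForest_starEdges_union {a b : Fin n} {La Lb : Finset (Fin n)}
    (hab : Disjoint (insert a La) (insert b Lb)) (ha : a ∉ La) (hb : b ∉ Lb) :
    IsKStarForest (starEdges a La ∪ starEdges b Lb) 2 := by
  have ha_notMem : ∀ e ∈ starEdges b Lb, a ∉ e := fun e he hae =>
    disjoint_left.1 hab (mem_insert_self a La) (mem_insert_of_mem_starEdges he hae)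
  refine ⟨fun e => if a ∈ e then a else b, ⟨fun e he => ?_, fun e he f hf hef v hve hvf => ?_⟩, ?_⟩
  · rcases mem_union.1 he with he | he
    · simp [center_mem_of_mem_starEdges he]
    · simp [ha_notMem e he, center_mem_of_mem_starEdges he]
  · rcases mem_union.1 he with he | he <;> rcases mem_union.1 hf with hf | hf
    · simp [center_mem_of_mem_starEdges he, eq_center_of_mem_starEdges ha he hf hef hve hvf]
    · exact absurd (mem_insert_of_mem_starEdges hf hvf)
        (disjoint_left.1 hab (mem_insert_of_mem_starEdges he hve))
    · exact absurd (mem_insert_of_mem_starEdges he hve)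
        (disjoint_left.1 hab (mem_insert_of_mem_starEdges hf hvf))
    · simp [ha_notMem e he, eq_center_of_mem_starEdges hb he hf hef hve hvf]
  · refine (card_le_card (t := {a, b}) (image_subset_iff.2 fun e _ => ?_)).trans card_le_two
    split_ifs <;> simp

section TwoStars

variable {a b : Fin n} {X Y : Finset (Fin n)}

lemma isKStarForest_twoStars (hXY : Disjoint X Y) (ha : a ∈ X) (hb : b ∈ Y) :
    IsKStarForest (twoStars a b X Y) 2 :=
  isKStarForest_starEdges_union (by rwa [insert_erase ha, insert_erase hb])
    (notMem_erase a X) (notMem_erase b Y)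

lemma twoStars_subset_kedges : twoStars a b X Y ⊆ Kedges n :=
  union_subset (starEdges_subset_kedges (notMem_erase a X))
    (starEdges_subset_kedges (notMem_erase b Y))

end TwoStars

/-- In round `t`, side `s` takes its centres from part `roundCenter t s` and its star spans that
part together with part `roundPartner t s`. -/
def roundCenter : Fin 3 → Fin 2 → Fin 4 := ![![1, 0], ![3, 2], ![0, 2]]

def roundPartner : Fin 3 → Fin 2 → Fin 4 := ![![2, 3], ![1, 0], ![1, 3]]

lemma exists_round_covering_parts (i j : Fin 4) : ∃ t s,
    (i = roundCenter t s ∧ (j = roundCenter t s ∨ j = roundPartner t s)) ∨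
      (j = roundCenter t s ∧ (i = roundCenter t s ∨ i = roundPartner t s)) := by
  revert i j
  decide

section Rounds

variable {m : ℕ} (V : Fin 4 → Finset (Fin n)) (σ : Fin 4 → Fin m → Fin n)

def roundSide (t : Fin 3) (s : Fin 2) : Finset (Fin n) :=
  V (roundCenter t s) ∪ V (roundPartner t s)

def roundForest (t : Fin 3) (k : Fin m) : Finset (Sym2 (Fin n)) :=
  twoStars (σ (roundCenter t 0) k) (σ (roundCenter t 1) k) (roundSide V t 0) (roundSide V t 1)

variable {V}

lemma disjoint_roundSide (hdisj : ∀ i j, i ≠ j → Disjoint (V i) (V j)) (t : Fin 3) :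
    Disjoint (roundSide V t 0) (roundSide V t 1) := by
  simp only [roundSide, disjoint_union_left, disjoint_union_right]
  refine ⟨⟨?_, ?_⟩, ?_, ?_⟩ <;> apply hdisj <;> revert t <;> decide

lemma isKStarForest_roundForest (hdisj : ∀ i j, i ≠ j → Disjoint (V i) (V j))
    (hσ : ∀ i k, σ i k ∈ V i) (t : Fin 3) (k : Fin m) :
    IsKStarForest (roundForest V σ t k) 2 :=
  isKStarForest_twoStars (disjoint_roundSide hdisj t) (mem_union_left _ (hσ _ k))
    (mem_union_left _ (hσ _ k))

lemma mk_mem_roundForest {t : Fin 3} {s : Fin 2} {k : Fin m} {v : Fin n}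
    (hv : v ∈ roundSide V t s) (hne : v ≠ σ (roundCenter t s) k) :
    s(σ (roundCenter t s) k, v) ∈ roundForest V σ t k := by
  have hmem := mem_image_of_mem (s(σ (roundCenter t s) k, ·)) (mem_erase.2 ⟨hne, hv⟩)
  fin_cases s
  · exact mem_union_left _ hmem
  · exact mem_union_right _ hmem

lemma exists_mem_roundForest (hunion : ∀ v, ∃ i, v ∈ V i)
    (hσ : ∀ i, ∀ u ∈ V i, ∃ k, σ i k = u) {e : Sym2 (Fin n)} (he : e ∈ Kedges n) :
    ∃ t k, e ∈ roundForest V σ t k := by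
  have hcenter : ∀ {t s u v}, u ∈ V (roundCenter t s) → v ∈ roundSide V t s → u ≠ v →
      ∃ k, s(u, v) ∈ roundForest V σ t k := by
    intro t s u v hu hv huv
    obtain ⟨k, rfl⟩ := hσ _ u hu
    exact ⟨k, mk_mem_roundForest σ hv huv.symm⟩
  induction e using Sym2.inductionOn with
  | hf u v =>
    have huv : u ≠ v := by simpa [Kedges] using he
    obtain ⟨i, hu⟩ := hunion u
    obtain ⟨j, hv⟩ := hunion v
    obtain ⟨t, s, ⟨rfl, hj⟩ | ⟨rfl, hi⟩⟩ := exists_round_covering_parts i j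
    · obtain ⟨k, hk⟩ := hcenter hu (by rcases hj with rfl | rfl <;> simp [roundSide, hv]) huv
      exact ⟨t, k, hk⟩
    · obtain ⟨k, hk⟩ := hcenter hv (by rcases hi with rfl | rfl <;> simp [roundSide, hu]) huv.symm
      exact ⟨t, k, Sym2.eq_swap ▸ hk⟩

end Rounds

lemma exists_twoStarForest_cover {m : ℕ} (V : Fin 4 → Finset (Fin n))
    (hdisj : ∀ i j, i ≠ j → Disjoint (V i) (V j)) (hunion : ∀ v, ∃ i, v ∈ V i)
    (hcard : ∀ i, (V i).card = m) :
    ∃ F : Fin 3 → Fin m → Finset (Sym2 (Fin n)),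
      (∀ t k, IsKStarForest (F t k) 2 ∧ F t k ⊆ Kedges n) ∧
        ∀ e ∈ Kedges n, ∃ t k, e ∈ F t k := by
  let σ : Fin 4 → Fin m → Fin n := fun i => (V i).orderEmbOfFin (hcard i)
  have hσ_surj : ∀ i, ∀ u ∈ V i, ∃ k, σ i k = u := fun i u hu => by
    rwa [← mem_coe, ← range_orderEmbOfFin (V i) (hcard i)] at hu
  refine ⟨roundForest V σ, fun t k => ⟨?_, twoStars_subset_kedges⟩,
    fun e he => exists_mem_roundForest σ hunion hσ_surj he⟩
  exact isKStarForest_roundForest σ hdisj (fun i => (V i).orderEmbOfFin_mem (hcard i)) t k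

/-- if n is divisible by 4 and the vertex set of K_n is partitioned
into four sets of size n/4, then K_n can be covered by 3n/4 subgraphs, each a
vertex-disjoint union of at most two stars (a 2-star-forest). -/
theorem stmt12 (m : ℕ) (V : Fin 4 → Finset (Fin (4 * m)))
    (hdisj : ∀ i j, i ≠ j → Disjoint (V i) (V j))
    (hunion : ∀ v, ∃ i, v ∈ V i)
    (hcard : ∀ i, (V i).card = m) :
    ∃ F : Fin (3 * m) → Finset (Sym2 (Fin (4 * m))),
      (∀ i, IsKStarForest (F i) 2 ∧ F i ⊆ Kedges (4 * m)) ∧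
      ∀ e ∈ Kedges (4 * m), ∃ i, e ∈ F i := by
  obtain ⟨F, hF, hcover⟩ := exists_twoStarForest_cover V hdisj hunion hcard
  refine ⟨fun i => F (finProdFinEquiv.symm i).1 (finProdFinEquiv.symm i).2, fun i => hF _ _,
    fun e he => ?_⟩
  obtain ⟨t, k, hk⟩ := hcover e he
  exact ⟨finProdFinEquiv (t, k), by simpa using hk⟩
end

section
/- If every 2-star-forest in a covering of K_n (n ≥ 5) has two centers, and the covering uses t 2-star-forests, then t ≥ ⌈3n/4⌉; moreover if some 2-star-forest in a minimal covering has only one center, removing that center and that forest yields a covering of K_{n-1} by t-1 2-star-forests. -/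
/-!
Let `d(v)` be the number of forests having `v` as a center, so that `∑ d(v) = 2t`. If some
vertex `w` is never a center, every forest contains at most one edge at `w`, so `t ≥ n - 1`.
Otherwise call `v` lone if `d(v) = 1`. The partner `p` of a lone vertex `v` (the other center of
its forest) has `d(p) ≥ 2`, since the edge `pv` lies in a different forest, centered at `p`.
Start every vertex with `2d(v) - 3` units, which is `-1` exactly at the lone vertices, and let
every center pass one unit to each of its lone partners. A non-lone `p` can afford this, except
when `d(p) = 2` and both partners are lone; that case is impossible, because the edge joining
the two partners would then lie in no forest. Hence `4t - 3n = ∑ (2d(v) - 3) ≥ 0`.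
-/

open Finset

theorem Finset.eq_singleton_of_mem_of_card_eq_one {α : Type*} {s : Finset α} {a : α}
    (ha : a ∈ s) (h : #s = 1) : s = {a} := by
  obtain ⟨b, rfl⟩ := card_eq_one.mp h
  rw [mem_singleton.mp ha]

theorem IsStarForestOn.center_eq_of_center_mem {n : ℕ} {E : Finset (Sym2 (Fin n))}
    {c : Sym2 (Fin n) → Fin n} (hE : IsStarForestOn E c) {e f : Sym2 (Fin n)} (he : e ∈ E)
    (hf : f ∈ E) (hcf : c f ∈ e) : c e = c f := by
  rcases eq_or_ne e f with rfl | hne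
  · rfl
  · exact hE.2 e he f hf hne _ hcf (hE.1 f hf)

theorem IsKStarForest.mono {n k : ℕ} {E E' : Finset (Sym2 (Fin n))} (h : E' ⊆ E)
    (hE : IsKStarForest E k) : IsKStarForest E' k := by
  obtain ⟨c, ⟨hmem, hstar⟩, hcard⟩ := hE
  exact ⟨c, ⟨fun e he => hmem e (h he), fun e he f hf => hstar e (h he) f (h hf)⟩,
    (card_le_card (image_subset_image h)).trans hcard⟩

namespace IsTwoStar

variable {n : ℕ} {E : Finset (Sym2 (Fin n))} {a b : Fin n}

theorem center_mem (h : IsTwoStar E a b) {e : Sym2 (Fin n)} (he : e ∈ E) :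
    a ∈ e ∨ b ∈ e := by
  obtain ⟨c, ⟨hmem, -⟩, hc, -⟩ := h
  rcases hc e he with h | h
  · exact .inl (h ▸ hmem e he)
  · exact .inr (h ▸ hmem e he)

theorem eq_or_eq_of_mem_of_mem (h : IsTwoStar E a b) {w u u' : Fin n} (hu : s(w, u) ∈ E)
    (hu' : s(w, u') ∈ E) (huu' : u ≠ u') : w = a ∨ w = b := by
  obtain ⟨c, ⟨-, hstar⟩, hc, -⟩ := h
  have hne : s(w, u) ≠ s(w, u') := fun heq => huu' (Sym2.congr_right.mp heq)
  rw [← hstar _ hu _ hu' hne w (Sym2.mem_mk_left _ _) (Sym2.mem_mk_left _ _)]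
  exact hc _ hu

theorem mk_notMem (hab : a ≠ b) (h : IsTwoStar E a b) : s(a, b) ∉ E := by
  obtain ⟨c, hc, -, ⟨ea, hea, hca⟩, ⟨eb, heb, hcb⟩⟩ := h
  intro hE
  have ha := hc.center_eq_of_center_mem hE hea (hca ▸ Sym2.mem_mk_left a b)
  have hb := hc.center_eq_of_center_mem hE heb (hcb ▸ Sym2.mem_mk_right a b)
  exact hab (hca.symm.trans (ha.symm.trans (hb.trans hcb)))

end IsTwoStar

structure TwoCenterCover (n t : ℕ) where
  F : Fin t → Finset (Sym2 (Fin n))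
  a : Fin t → Fin n
  b : Fin t → Fin n
  a_ne_b : ∀ i, a i ≠ b i
  isTwoStar : ∀ i, IsTwoStar (F i) (a i) (b i)
  covers : ∀ e ∈ Kedges n, ∃ i, e ∈ F i

namespace TwoCenterCover

variable {n t : ℕ} (C : TwoCenterCover n t) {i j : Fin t} {u v w p : Fin n}

def centeredAt (v : Fin n) : Finset (Fin t) :=
  univ.filter fun i => C.a i = v ∨ C.b i = v

@[simp]
theorem mem_centeredAt : i ∈ C.centeredAt v ↔ C.a i = v ∨ C.b i = v := by
  simp [centeredAt]

theorem exists_mem_of_ne (h : u ≠ w) : ∃ i, s(u, w) ∈ C.F i :=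
  C.covers _ (by simpa [Kedges] using h)

theorem mem_centeredAt_or_of_mem (h : s(u, w) ∈ C.F i) :
    i ∈ C.centeredAt u ∨ i ∈ C.centeredAt w := by
  rcases (C.isTwoStar i).center_mem h with h | h <;> rcases Sym2.mem_iff.mp h with h | h <;>
    simp [h]

theorem mem_centeredAt_of_mem_of_mem {u' : Fin n} (hu : s(w, u) ∈ C.F i)
    (hu' : s(w, u') ∈ C.F i) (huu' : u ≠ u') : i ∈ C.centeredAt w := by
  rcases (C.isTwoStar i).eq_or_eq_of_mem_of_mem hu hu' huu' with h | h <;> simp [h]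

theorem mk_notMem (hu : i ∈ C.centeredAt u) (hw : i ∈ C.centeredAt w) (huw : u ≠ w) :
    s(u, w) ∉ C.F i := by
  have hnot := (C.isTwoStar i).mk_notMem (C.a_ne_b i)
  rw [mem_centeredAt] at hu hw
  rcases hu with rfl | rfl <;> rcases hw with rfl | rfl
  · exact absurd rfl huw
  · exact hnot
  · rwa [Sym2.eq_swap]
  · exact absurd rfl huw

theorem sum_sum_centeredAt {M : Type*} [AddCommMonoid M] (g : Fin t → Fin n → M) :
    ∑ v, ∑ i ∈ C.centeredAt v, g i v = ∑ i, (g i (C.a i) + g i (C.b i)) := by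
  simp only [centeredAt, sum_filter]
  rw [sum_comm]
  refine sum_congr rfl fun i _ => ?_
  rw [← sum_filter, ← sum_pair (C.a_ne_b i)]
  congr 1
  ext v
  simp [eq_comm]

theorem sum_card_centeredAt : ∑ v, #(C.centeredAt v) = 2 * t := by
  have := C.sum_sum_centeredAt fun _ _ => 1
  simp only [sum_const, card_univ, Fintype.card_fin, smul_eq_mul, mul_one] at this
  omega

theorem sub_one_le_of_centeredAt_eq_empty (hw : C.centeredAt w = ∅) : n - 1 ≤ t := by
  choose f hf using fun u : {u // u ≠ w} => C.exists_mem_of_ne u.2.symm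
  have hinj : Function.Injective f := by
    intro u u' huu'
    by_contra hne
    have := C.mem_centeredAt_of_mem_of_mem (hf u) (huu' ▸ hf u') (Subtype.coe_ne_coe.mpr hne)
    simp [hw] at this
  simpa [Set.card_ne_eq] using Fintype.card_le_of_injective f hinj

def partner (i : Fin t) (v : Fin n) : Fin n :=
  if C.a i = v then C.b i else C.a i

@[simp]
theorem partner_a : C.partner i (C.a i) = C.b i := by
  simp [partner]

@[simp]
theorem partner_b : C.partner i (C.b i) = C.a i := by
  simp [partner, C.a_ne_b i]

theorem mem_centeredAt_partner : i ∈ C.centeredAt (C.partner i v) := by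
  unfold partner
  split_ifs <;> simp

theorem partner_ne (hi : i ∈ C.centeredAt v) : C.partner i v ≠ v := by
  rcases C.mem_centeredAt.mp hi with rfl | rfl <;> simp [C.a_ne_b i, Ne.symm (C.a_ne_b i)]

theorem partner_partner (hi : i ∈ C.centeredAt v) : C.partner i (C.partner i v) = v := by
  rcases C.mem_centeredAt.mp hi with rfl | rfl <;> simp

theorem exists_mem_centeredAt_partner (hv : C.centeredAt v = {i}) :
    ∃ k ∈ C.centeredAt (C.partner i v), k ≠ i ∧ s(C.partner i v, v) ∈ C.F k := by
  have hi : i ∈ C.centeredAt v := hv ▸ mem_singleton_self i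
  have hip : i ∈ C.centeredAt (C.partner i v) := C.mem_centeredAt_partner
  obtain ⟨k, hk⟩ := C.exists_mem_of_ne (C.partner_ne hi)
  have hki : k ≠ i := by
    rintro rfl
    exact C.mk_notMem hip hi (C.partner_ne hi) hk
  refine ⟨k, ?_, hki, hk⟩
  refine (C.mem_centeredAt_or_of_mem hk).resolve_right fun h => hki ?_
  rwa [hv, mem_singleton] at h

theorem one_lt_card_centeredAt_partner (hv : C.centeredAt v = {i}) :
    1 < #(C.centeredAt (C.partner i v)) := by
  obtain ⟨k, hk, hki, -⟩ := C.exists_mem_centeredAt_partner hv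
  exact one_lt_card.mpr ⟨k, hk, i, C.mem_centeredAt_partner, hki⟩

theorem mk_partner_notMem (hp : C.centeredAt p = {i, j}) (hij : i ≠ j)
    (hi : C.centeredAt (C.partner i p) = {i}) (hj : C.centeredAt (C.partner j p) = {j}) :
    s(C.partner i p, C.partner j p) ∉ C.F i := by
  have hjp : j ∈ C.centeredAt p := by simp [hp]
  obtain ⟨k, hk, hkj, hkF⟩ := C.exists_mem_centeredAt_partner hj
  rw [C.partner_partner hjp] at hk hkF
  rw [hp, mem_insert, mem_singleton] at hk
  obtain rfl : k = i := hk.resolve_right hkj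
  -- `s(p, partner j p)` lies in forest `k` too, so `partner j p` would be a center of `k`
  intro hF
  have := C.mem_centeredAt_of_mem_of_mem (Sym2.eq_swap ▸ hF) (Sym2.eq_swap ▸ hkF)
    (C.partner_ne (hp ▸ mem_insert_self k {j}))
  rw [hj, mem_singleton] at this
  exact hij this

theorem centeredAt_partner_ne_singleton (hp : C.centeredAt p = {i, j}) (hij : i ≠ j)
    (hi : C.centeredAt (C.partner i p) = {i}) : C.centeredAt (C.partner j p) ≠ {j} := by
  intro hj
  have hne : C.partner i p ≠ C.partner j p := fun h => hij (singleton_inj.mp (hi ▸ h ▸ hj))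
  obtain ⟨k, hk⟩ := C.exists_mem_of_ne hne
  rcases C.mem_centeredAt_or_of_mem hk with h | h
  · rw [hi, mem_singleton] at h
    exact C.mk_partner_notMem hp hij hi hj (h ▸ hk)
  · rw [hj, mem_singleton] at h
    exact C.mk_partner_notMem (pair_comm i j ▸ hp) hij.symm hj hi
      (Sym2.eq_swap ▸ h ▸ hk)

def lone (v : Fin n) : ℕ :=
  if #(C.centeredAt v) = 1 then 1 else 0

def lonePartners (v : Fin n) : ℕ :=
  ∑ i ∈ C.centeredAt v, C.lone (C.partner i v)

theorem sum_lonePartners : ∑ v, C.lonePartners v = ∑ v, #(C.centeredAt v) * C.lone v := by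
  have h := C.sum_sum_centeredAt fun _ v => C.lone v
  simp only [sum_const, smul_eq_mul] at h
  rw [h]
  unfold lonePartners
  rw [C.sum_sum_centeredAt fun i v => C.lone (C.partner i v)]
  simp [add_comm]

theorem three_add_lonePartners_le (hv : (C.centeredAt v).Nonempty) :
    3 + C.lonePartners v ≤ 2 * #(C.centeredAt v) + #(C.centeredAt v) * C.lone v := by
  have hpos := hv.card_pos
  obtain h1 | h2 | h3 :
      #(C.centeredAt v) = 1 ∨ #(C.centeredAt v) = 2 ∨ 3 ≤ #(C.centeredAt v) := by
    omega
  · obtain ⟨i, hi⟩ := card_eq_one.mp h1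
    have := C.one_lt_card_centeredAt_partner hi
    simp [lonePartners, lone, hi, this.ne']
  · obtain ⟨i, j, hij, hp⟩ := card_eq_two.mp h2
    have hlone : C.lone v = 0 := by simp [lone, h2]
    rw [h2, hlone, lonePartners, hp, sum_pair hij]
    unfold lone
    split_ifs with hi1 hj1
    · exact absurd (eq_singleton_of_mem_of_card_eq_one C.mem_centeredAt_partner hj1)
        (C.centeredAt_partner_ne_singleton hp hij
          (eq_singleton_of_mem_of_card_eq_one C.mem_centeredAt_partner hi1))
    all_goals omega
  · have hle : ∀ i ∈ C.centeredAt v, C.lone (C.partner i v) ≤ 1 := fun i _ => by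
      unfold lone
      split_ifs <;> simp
    have : C.lonePartners v ≤ #(C.centeredAt v) := by
      simpa [lonePartners] using sum_le_card_nsmul _ _ 1 hle
    omega

theorem three_mul_le_four_mul (h : ∀ v, (C.centeredAt v).Nonempty) : 3 * n ≤ 4 * t := by
  have := sum_le_sum fun v (_ : v ∈ univ) => C.three_add_lonePartners_le (h v)
  rw [sum_add_distrib, sum_add_distrib, ← mul_sum, C.sum_card_centeredAt, ← C.sum_lonePartners]
    at this
  simp only [sum_const, card_univ, Fintype.card_fin, smul_eq_mul] at this
  omega

theorem le_card (C : TwoCenterCover n t) (hn : 5 ≤ n) : (3 * n + 3) / 4 ≤ t := by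
  by_cases h : ∀ v, (C.centeredAt v).Nonempty
  · have := C.three_mul_le_four_mul h
    omega
  · push Not at h
    obtain ⟨w, hw⟩ := h
    have := C.sub_one_le_of_centeredAt_eq_empty hw
    omega

end TwoCenterCover

theorem exists_cover_erase_of_forall_mem {n t k : ℕ} {F : Fin t → Finset (Sym2 (Fin n))}
    (hF : ∀ i, IsKStarForest (F i) k) (hsub : ∀ i, F i ⊆ Kedges n)
    (hcov : ∀ e ∈ Kedges n, ∃ i, e ∈ F i) (i₀ : Fin t) (v : Fin n)
    (hv : ∀ e ∈ F i₀, v ∈ e) :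
    ∃ G : Fin (t - 1) → Finset (Sym2 (Fin n)),
      (∀ j, IsKStarForest (G j) k ∧ G j ⊆ Kedges n ∧ ∀ e ∈ G j, v ∉ e) ∧
      ∀ e ∈ Kedges n, v ∉ e → ∃ j, e ∈ G j := by
  cases t with
  | zero => exact i₀.elim0
  | succ s =>
    refine ⟨fun j => (F (i₀.succAbove j)).filter (v ∉ ·), fun j =>
      ⟨(hF _).mono (filter_subset _ _), (filter_subset _ _).trans (hsub _),
        fun e he => (mem_filter.mp he).2⟩, fun e he hve => ?_⟩
    obtain ⟨i, hi⟩ := hcov e he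
    obtain ⟨j, rfl⟩ := Fin.exists_succAbove_eq fun h : i = i₀ => hve (hv e (h ▸ hi))
    exact ⟨j, mem_filter.mpr ⟨hi, hve⟩⟩

/-- (i) if K_n (n ≥ 5) is covered by t 2-star-forests each having two
designated centers, then t ≥ ⌈3n/4⌉; (ii) if some 2-star-forest in a covering is a
single star with center v, removing v and that forest yields a covering of the
complete graph on the remaining n-1 vertices by t-1 2-star-forests. -/
theorem stmt19 (n : ℕ) (hn : 5 ≤ n) :
    (∀ (t : ℕ) (F : Fin t → Finset (Sym2 (Fin n))) (a b : Fin t → Fin n),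
      (∀ i, a i ≠ b i) → (∀ i, IsTwoStar (F i) (a i) (b i)) →
      (∀ i, F i ⊆ Kedges n) → (∀ e ∈ Kedges n, ∃ i, e ∈ F i) →
      (3 * n + 3) / 4 ≤ t) ∧
    (∀ (t : ℕ) (F : Fin t → Finset (Sym2 (Fin n))),
      (∀ i, IsKStarForest (F i) 2) → (∀ i, F i ⊆ Kedges n) →
      (∀ e ∈ Kedges n, ∃ i, e ∈ F i) →
      ∀ (i₀ : Fin t) (v : Fin n), (∀ e ∈ F i₀, v ∈ e) →
      ∃ G : Fin (t - 1) → Finset (Sym2 (Fin n)),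
        (∀ j, IsKStarForest (G j) 2 ∧ G j ⊆ Kedges n ∧ ∀ e ∈ G j, v ∉ e) ∧
        ∀ e ∈ Kedges n, v ∉ e → ∃ j, e ∈ G j) :=
  ⟨fun _ F a b hab hF _ hcov => (TwoCenterCover.mk F a b hab hF hcov).le_card hn,
    fun _ _ hF hsub hcov => exists_cover_erase_of_forall_mem hF hsub hcov⟩
end
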